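/- arXiv:1402.7099 — 2 statements merged into one kernel-verified Lean document; each statement's English description precedes it below -/
import Mathlib

section
/- Let α be a contact form on ℝ³. (i) The projection π : ℝ³ × ℝ⁺(t) × S¹(s) → ℝ² ∖ {0}, (p, t, s) ↦ (t, s), is a contact fibration for ξ = ker(tα − ds): the restriction of ξ to each fibre ℝ³ × {(t₀, s₀)} is the contact structure ker α. (ii) With g : ℝ⁺ × (0, 2π) → ℝ² given by g(r, θ) = (t, s) where 1/t = −4 cos²(θ/4)·r² and s = tan(θ/4), the map G = (id, g) satisfies G*(α − (1/t) ds) = α + r² dθ; hence G is a diffeomorphism onto its image carrying the contact structure ker(α + r² dθ) on ℝ³ × ℝ⁺(r) × (0, 2π)(θ) to ker(α − (1/t) ds), and G commutes with the projections onto the last two factors. -/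
/-!
STATEMENT 5: (i) The projection of (ℝ³ × ℝ⁺(t) × S¹(s), ker(tα - ds)) onto the
last two factors is a contact fibration: the restriction of ker(tα - ds) to each
fibre ℝ³ × {(t₀, s₀)} (t₀ > 0) is ker α.
(ii) With g(r, θ) = (t, s), 1/t = -4 cos²(θ/4) r², s = tan(θ/4), the map
G = (id, g) satisfies G*(α - (1/t) ds) = α + r² dθ on ℝ³ × ℝ⁺(r) × (0, 2π)(θ);
G is a diffeomorphism onto its image and commutes with the projections.
-/

noncomputable section

abbrev V3 : Type := Fin 3 → ℝ

def e3 (i : Fin 3) : V3 := Pi.single i 1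

def d2 {E : Type*} [NormedAddCommGroup E] [NormedSpace ℝ E]
    (α : E → E →L[ℝ] ℝ) (x v w : E) : ℝ :=
  fderiv ℝ α x v w - fderiv ℝ α x w v

def IsContactForm3 (α : V3 → V3 →L[ℝ] ℝ) : Prop :=
  ContDiff ℝ (⊤ : ℕ∞) α ∧ ∀ p : V3,
    α p (e3 0) * d2 α p (e3 1) (e3 2)
      - α p (e3 1) * d2 α p (e3 0) (e3 2)
      + α p (e3 2) * d2 α p (e3 0) (e3 1) ≠ 0

/-- the 1-form t α - ds on ℝ³ × ℝ(t) × ℝ(s), evaluated on a vector -/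
def lamC (α : V3 → V3 →L[ℝ] ℝ) (q : V3 × ℝ × ℝ) (v : V3 × ℝ × ℝ) : ℝ :=
  q.2.1 * α q.1 v.1 - v.2.2

abbrev Lr : (V3 × ℝ × ℝ) →L[ℝ] ℝ :=
  (ContinuousLinearMap.fst ℝ ℝ ℝ).comp (ContinuousLinearMap.snd ℝ V3 (ℝ × ℝ))
abbrev Lθ : (V3 × ℝ × ℝ) →L[ℝ] ℝ :=
  (ContinuousLinearMap.snd ℝ ℝ ℝ).comp (ContinuousLinearMap.snd ℝ V3 (ℝ × ℝ))

/-- explicit total derivative of G at q -/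
def LG (q : V3 × ℝ × ℝ) : (V3 × ℝ × ℝ) →L[ℝ] V3 × ℝ × ℝ :=
  (ContinuousLinearMap.fst ℝ V3 (ℝ × ℝ)).prod
    (((1 / (2 * Real.cos (q.2.2 / 4) ^ 2 * q.2.1 ^ 3)) • Lr
        + (-(Real.sin (q.2.2 / 4)) / (8 * Real.cos (q.2.2 / 4) ^ 3 * q.2.1 ^ 2)) • Lθ).prod
      ((1 / (4 * Real.cos (q.2.2 / 4) ^ 2)) • Lθ))

lemma hasFDerivAt_G (q : V3 × ℝ × ℝ) (hr : 0 < q.2.1)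
    (hc : Real.cos (q.2.2 / 4) ≠ 0) :
    HasFDerivAt (fun q : V3 × ℝ × ℝ =>
      (q.1, -1 / (4 * Real.cos (q.2.2 / 4) ^ 2 * q.2.1 ^ 2), Real.tan (q.2.2 / 4)))
      (LG q) q := by
  have hLr : HasFDerivAt (fun q : V3 × ℝ × ℝ => q.2.1) Lr q := Lr.hasFDerivAt
  have hLθ : HasFDerivAt (fun q : V3 × ℝ × ℝ => q.2.2) Lθ q := Lθ.hasFDerivAt
  have hθ4 : HasFDerivAt (fun q : V3 × ℝ × ℝ => q.2.2 / 4) ((4:ℝ)⁻¹ • Lθ) q := by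
    simpa [div_eq_inv_mul] using hLθ.const_mul ((4:ℝ)⁻¹)
  have hcos : HasFDerivAt (fun q : V3 × ℝ × ℝ => Real.cos (q.2.2 / 4))
      ((-Real.sin (q.2.2/4)) • ((4:ℝ)⁻¹ • Lθ)) q :=
    (Real.hasDerivAt_cos _).comp_hasFDerivAt q hθ4
  have hc2 := hcos.mul hcos
  have hr2 := hLr.mul hLr
  have hD := (hc2.const_mul (4:ℝ)).mul hr2
  have hDval : (fun q : V3 × ℝ × ℝ =>
      4 * (Real.cos (q.2.2/4) * Real.cos (q.2.2/4)) * (q.2.1 * q.2.1)) q ≠ 0 := by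
    have := hr.ne'
    simp only []
    positivity
  have hinv := (hasDerivAt_inv hDval).comp_hasFDerivAt q hD
  have hf := hinv.const_mul (-1 : ℝ)
  have hft : HasFDerivAt (fun q : V3 × ℝ × ℝ =>
      -1 / (4 * Real.cos (q.2.2 / 4) ^ 2 * q.2.1 ^ 2))
      ((1 / (2 * Real.cos (q.2.2 / 4) ^ 2 * q.2.1 ^ 3)) • Lr
        + (-(Real.sin (q.2.2 / 4)) / (8 * Real.cos (q.2.2 / 4) ^ 3 * q.2.1 ^ 2)) • Lθ) q := by
    have hf' := hf.congr_of_eventuallyEq (f₁ := fun q : V3 × ℝ × ℝ =>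
        -1 / (4 * Real.cos (q.2.2 / 4) ^ 2 * q.2.1 ^ 2))
      (Filter.Eventually.of_forall fun y => by
        simp only [Function.comp_apply, Pi.mul_apply, Pi.pow_apply]
        ring)
    refine hf'.congr_fderiv ?_
    refine ContinuousLinearMap.ext fun v => ?_
    simp [Function.comp]
    field_simp
    ring
  have htan : HasFDerivAt (fun q : V3 × ℝ × ℝ => Real.tan (q.2.2/4))
      ((1 / (4 * Real.cos (q.2.2/4) ^ 2)) • Lθ) q := by
    have h := (Real.hasDerivAt_tan hc).comp_hasFDerivAt q hθ4
    refine h.congr_fderiv ?_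
    refine ContinuousLinearMap.ext fun v => ?_
    simp [Function.comp]
    field_simp
  exact HasFDerivAt.prodMk (ContinuousLinearMap.fst ℝ V3 (ℝ × ℝ)).hasFDerivAt (hft.prodMk htan)

theorem contact_fibration_and_coordinate_change
    (α : V3 → V3 →L[ℝ] ℝ) (hα : IsContactForm3 α) :
    -- (i) contact fibration: on each fibre ℝ³ × {(t₀, s₀)}, t₀ > 0, the
    -- restriction of ker(tα - ds) to fibre directions (v, 0, 0) is ker α
    (∀ t₀ : ℝ, 0 < t₀ → ∀ s₀ : ℝ, ∀ p : V3,
      {v : V3 | lamC α (p, t₀, s₀) (v, (0 : ℝ), (0 : ℝ)) = 0}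
        = {v : V3 | α p v = 0}) ∧
    -- (ii) the coordinate change G = (id, g)
    (let G : V3 × ℝ × ℝ → V3 × ℝ × ℝ := fun q =>
        (q.1, -1 / (4 * Real.cos (q.2.2 / 4) ^ 2 * q.2.1 ^ 2), Real.tan (q.2.2 / 4))
      let S : Set (V3 × ℝ × ℝ) :=
        {q | 0 < q.2.1 ∧ 0 < q.2.2 ∧ q.2.2 < 2 * Real.pi}
      -- G is a smooth injective immersion (diffeomorphism onto its image) on S
      ContDiffOn ℝ (⊤ : ℕ∞) G S ∧ Set.InjOn G S ∧
      (∀ q ∈ S, Function.Injective (fderiv ℝ G q)) ∧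
      -- G commutes with the projections onto the last two factors
      (∀ q : V3 × ℝ × ℝ, (G q).1 = q.1) ∧
      (∀ q q' : V3 × ℝ × ℝ, q.2 = q'.2 → (G q).2 = (G q').2) ∧
      -- pullback identity: G*(α - (1/t) ds) = α + r² dθ
      (∀ q ∈ S, ∀ v : V3 × ℝ × ℝ,
        α (G q).1 (fderiv ℝ G q v).1 - (1 / (G q).2.1) * (fderiv ℝ G q v).2.2
          = α q.1 v.1 + q.2.1 ^ 2 * v.2.2)) := by
  constructor
  · intro t₀ ht s₀ p
    ext v
    simp only [Set.mem_setOf_eq, lamC, sub_zero]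
    constructor
    · intro h
      rcases mul_eq_zero.1 h with h | h
      · exact absurd h ht.ne'
      · exact h
    · intro h; rw [h, mul_zero]
  · intro G S
    -- basic facts about points of S
    have hmem : ∀ q ∈ S, 0 < q.2.1 ∧ 0 < Real.cos (q.2.2 / 4) ∧
        q.2.2 / 4 ∈ Set.Ioo (-(Real.pi/2)) (Real.pi/2) := by
      intro q hq
      obtain ⟨hr, hθ0, hθ2⟩ := hq
      have hπ := Real.pi_pos
      have h1 : -(Real.pi/2) < q.2.2/4 := by nlinarith
      have h2 : q.2.2/4 < Real.pi/2 := by nlinarith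
      exact ⟨hr, Real.cos_pos_of_mem_Ioo ⟨h1, h2⟩, h1, h2⟩
    refine ⟨?_, ?_, ?_, fun q => rfl, ?_, ?_⟩
    · -- ContDiffOn
      intro q hq
      obtain ⟨hr, hcpos, hmemI⟩ := hmem q hq
      have hc := hcpos.ne'
      have hθ : ContDiffAt ℝ (⊤ : ℕ∞) (fun q : V3 × ℝ × ℝ => q.2.2 / 4) q :=
        ((contDiff_snd.comp contDiff_snd).div_const 4).contDiffAt
      have hcos : ContDiffAt ℝ (⊤ : ℕ∞) (fun q : V3 × ℝ × ℝ => Real.cos (q.2.2 / 4)) q :=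
        Real.contDiff_cos.contDiffAt.comp q hθ
      have hrc : ContDiffAt ℝ (⊤ : ℕ∞) (fun q : V3 × ℝ × ℝ => q.2.1) q :=
        (contDiff_fst.comp contDiff_snd).contDiffAt
      have hden : ContDiffAt ℝ (⊤ : ℕ∞)
          (fun q : V3 × ℝ × ℝ => 4 * Real.cos (q.2.2 / 4) ^ 2 * q.2.1 ^ 2) q :=
        ((contDiffAt_const.mul (hcos.pow 2)).mul (hrc.pow 2))
      have hdenne : (4 * Real.cos (q.2.2 / 4) ^ 2 * q.2.1 ^ 2) ≠ 0 := by positivity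
      have hfc : ContDiffAt ℝ (⊤ : ℕ∞)
          (fun q : V3 × ℝ × ℝ => -1 / (4 * Real.cos (q.2.2 / 4) ^ 2 * q.2.1 ^ 2)) q :=
        contDiffAt_const.div hden hdenne
      have htanc : ContDiffAt ℝ (⊤ : ℕ∞) (fun q : V3 × ℝ × ℝ => Real.tan (q.2.2 / 4)) q :=
        ContDiffAt.comp (g := Real.tan) q (Real.contDiffAt_tan.2 hc) hθ
      exact (ContDiffAt.prodMk contDiffAt_fst (hfc.prodMk htanc)).contDiffWithinAt
    · -- InjOn
      intro q hq q' hq' h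
      obtain ⟨hr, hcpos, hI⟩ := hmem q hq
      obtain ⟨hr', hcpos', hI'⟩ := hmem q' hq'
      simp only [G, Prod.mk.injEq] at h
      obtain ⟨h1, h2, h3⟩ := h
      have hθ : q.2.2 = q'.2.2 := by
        have := Real.injOn_tan hI hI' h3
        linarith
      rw [← hθ] at h2
      have hc := hcpos.ne'
      have hrr : q.2.1 = q'.2.1 := by
        have hne : (4 * Real.cos (q.2.2 / 4) ^ 2 * q.2.1 ^ 2) ≠ 0 := by positivity
        have hne' : (4 * Real.cos (q.2.2 / 4) ^ 2 * q'.2.1 ^ 2) ≠ 0 := by positivity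
        field_simp at h2
        nlinarith [sq_nonneg (q.2.1 - q'.2.1), sq_nonneg (q.2.1 + q'.2.1), sq_nonneg (Real.cos (q.2.2/4))]
      exact Prod.ext h1 (Prod.ext hrr hθ)
    · -- fderiv injective
      intro q hq
      obtain ⟨hr, hcpos, hI⟩ := hmem q hq
      have hc := hcpos.ne'
      rw [(hasFDerivAt_G q hr hc).fderiv]
      intro v w hvw
      have h1 := congrArg Prod.fst hvw
      have h2 := congrArg (fun x : V3 × ℝ × ℝ => x.2.1) hvw
      have h3 := congrArg (fun x : V3 × ℝ × ℝ => x.2.2) hvw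
      simp only [LG, ContinuousLinearMap.prod_apply, ContinuousLinearMap.coe_fst',
        ContinuousLinearMap.add_apply, ContinuousLinearMap.coe_smul',
        ContinuousLinearMap.coe_comp', Function.comp, Pi.smul_apply, smul_eq_mul,
        ContinuousLinearMap.coe_snd'] at h1 h2 h3
      have hθeq : v.2.2 = w.2.2 := by
        have hne : (1 / (4 * Real.cos (q.2.2 / 4) ^ 2)) ≠ 0 := by positivity
        exact mul_left_cancel₀ hne h3
      have hreq : v.2.1 = w.2.1 := by
        rw [hθeq] at h2
        have h2' := add_right_cancel h2
        have hne : (1 / (2 * Real.cos (q.2.2 / 4) ^ 2 * q.2.1 ^ 3)) ≠ 0 := by positivity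
        exact mul_left_cancel₀ hne h2'
      exact Prod.ext h1 (Prod.ext hreq hθeq)
    · -- commutes with projections
      intro q q' h
      simp only [G]
      rw [h]
    · -- pullback identity
      intro q hq v
      obtain ⟨hr, hcpos, hI⟩ := hmem q hq
      have hc := hcpos.ne'
      rw [(hasFDerivAt_G q hr hc).fderiv]
      simp only [LG, ContinuousLinearMap.prod_apply, ContinuousLinearMap.coe_fst',
        ContinuousLinearMap.add_apply, ContinuousLinearMap.coe_smul',
        ContinuousLinearMap.coe_comp', Function.comp, Pi.smul_apply, smul_eq_mul,
        ContinuousLinearMap.coe_snd']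
      have hrne := hr.ne'
      simp only [G]
      field_simp
      ring
end
end

section
/- Let α be a contact form on ℝ³, let (r, θ) be polar coordinates on ℝ², and let L = {(r, θ) : r ≥ 0, θ = 0} be the closed horizontal ray. Then there exists a contactomorphism Φ : (ℝ³ × (ℝ² ∖ L), ker(α + r² dθ)) → (ℝ³ × ℝ⁺(t) × ℝ(s), ker(tα − ds)), i.e. onto the contactization of the symplectization CS(ℝ³, α). -/
/-!
STATEMENT 6 (Lemma `lem:m`): For a contact form α on ℝ³ and the closed ray
L = {(r,θ) : r ≥ 0, θ = 0} ⊂ ℝ² (Cartesian: {(x,y) | y = 0, x ≥ 0}), there is a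
contactomorphism Φ : (ℝ³ × (ℝ² ∖ L), ker(α + r²dθ)) → (ℝ³ × ℝ⁺(t) × ℝ(s), ker(tα - ds)).
In Cartesian coordinates r²dθ = x dy - y dx.
-/

noncomputable section

/-- ℝ³ × (ℝ² ∖ L), where L is the closed ray {y = 0, x ≥ 0} -/
def complL : Set (V3 × ℝ × ℝ) := {q | ¬ (q.2.2 = 0 ∧ 0 ≤ q.2.1)}

/-- ℝ³ × ℝ⁺(t) × ℝ(s), the contactization of the symplectization -/
def posT : Set (V3 × ℝ × ℝ) := {q | 0 < q.2.1}

namespace CSAux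

open ContinuousLinearMap

def D2 : Set (ℝ × ℝ) := {w | ¬ (w.2 = 0 ∧ 0 ≤ w.1)}

def rr (w : ℝ × ℝ) : ℝ := Real.sqrt (w.1 ^ 2 + w.2 ^ 2)

lemma rr_sq (w : ℝ × ℝ) : rr w ^ 2 = w.1 ^ 2 + w.2 ^ 2 :=
  Real.sq_sqrt (by positivity)

lemma sq_pos {w : ℝ × ℝ} (hw : w ∈ D2) : 0 < w.1 ^ 2 + w.2 ^ 2 := by
  rcases eq_or_ne w.2 0 with h | h
  · have hx : w.1 ≠ 0 := by
      intro hx; exact hw ⟨h, by rw [hx]⟩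
    positivity
  · positivity

lemma rr_pos {w : ℝ × ℝ} (hw : w ∈ D2) : 0 < rr w :=
  Real.sqrt_pos.mpr (sq_pos hw)

lemma uu_pos {w : ℝ × ℝ} (hw : w ∈ D2) : 0 < rr w - w.1 := by
  have hr := rr_pos hw
  have h2 := rr_sq w
  rcases lt_or_ge w.1 (rr w) with h | h
  · linarith
  · exfalso
    apply hw
    have hy : w.2 = 0 := by nlinarith
    exact ⟨hy, by nlinarith⟩

def tt (w : ℝ × ℝ) : ℝ := (rr w * (rr w - w.1))⁻¹

def FF (w : ℝ × ℝ) : ℝ × ℝ := (tt w, w.2 * (rr w - w.1)⁻¹)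

def GG (z : ℝ × ℝ) : ℝ × ℝ :=
  (Real.sqrt (2 / (z.1 * (z.2 ^ 2 + 1))) * (z.2 ^ 2 - 1) / 2,
   z.2 * Real.sqrt (2 / (z.1 * (z.2 ^ 2 + 1))))

lemma tt_pos {w : ℝ × ℝ} (hw : w ∈ D2) : 0 < tt w := by
  have := rr_pos hw; have := uu_pos hw
  unfold tt; positivity

/-- the derivative of `tt` -/
def Jt (w : ℝ × ℝ) : ℝ × ℝ →L[ℝ] ℝ :=
  (rr w ^ 3 * (rr w - w.1) ^ 2)⁻¹ •
    (((rr w - w.1) ^ 2) • fst ℝ ℝ ℝ - (w.2 * (2 * rr w - w.1)) • snd ℝ ℝ ℝ)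

/-- the derivative of the second component of `FF` -/
def Js (w : ℝ × ℝ) : ℝ × ℝ →L[ℝ] ℝ :=
  tt w • (w.2 • fst ℝ ℝ ℝ - w.1 • snd ℝ ℝ ℝ)

lemma hasFDerivAt_FF {w : ℝ × ℝ} (hw : w ∈ D2) :
    HasFDerivAt FF ((Jt w).prod (Js w)) w := by
  have hr := rr_pos hw
  have hu := uu_pos hw
  have h2 := rr_sq w
  have hrne : rr w ≠ 0 := ne_of_gt hr
  have hune : rr w - w.1 ≠ 0 := ne_of_gt hu
  have hsq : (w.1 ^ 2 + w.2 ^ 2) ≠ 0 := ne_of_gt (sq_pos hw)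
  have hq : HasFDerivAt (fun w : ℝ × ℝ => w.1 ^ 2 + w.2 ^ 2)
      ((w.1 • fst ℝ ℝ ℝ + w.1 • fst ℝ ℝ ℝ) + (w.2 • snd ℝ ℝ ℝ + w.2 • snd ℝ ℝ ℝ)) w := by
    have h1 : HasFDerivAt (fun w : ℝ × ℝ => w.1 * w.1)
        (w.1 • fst ℝ ℝ ℝ + w.1 • fst ℝ ℝ ℝ) w := hasFDerivAt_fst.mul hasFDerivAt_fst
    have h2' : HasFDerivAt (fun w : ℝ × ℝ => w.2 * w.2)
        (w.2 • snd ℝ ℝ ℝ + w.2 • snd ℝ ℝ ℝ) w := hasFDerivAt_snd.mul hasFDerivAt_snd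
    have := h1.add h2'
    have e : (fun w : ℝ × ℝ => w.1 ^ 2 + w.2 ^ 2) = fun w => w.1 * w.1 + w.2 * w.2 := by
      funext x
      ring
    rw [e]
    exact this
  have hrd : HasFDerivAt rr
      ((1 / (2 * Real.sqrt (w.1 ^ 2 + w.2 ^ 2))) •
        ((w.1 • fst ℝ ℝ ℝ + w.1 • fst ℝ ℝ ℝ) + (w.2 • snd ℝ ℝ ℝ + w.2 • snd ℝ ℝ ℝ))) w :=
    (Real.hasDerivAt_sqrt hsq).comp_hasFDerivAt w hq
  have hud : HasFDerivAt (fun w : ℝ × ℝ => rr w - w.1)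
      ((1 / (2 * Real.sqrt (w.1 ^ 2 + w.2 ^ 2))) •
        ((w.1 • fst ℝ ℝ ℝ + w.1 • fst ℝ ℝ ℝ) + (w.2 • snd ℝ ℝ ℝ + w.2 • snd ℝ ℝ ℝ))
        - fst ℝ ℝ ℝ) w := hrd.sub hasFDerivAt_fst
  have hprodne : rr w * (rr w - w.1) ≠ 0 := mul_ne_zero hrne hune
  have htd := (hasDerivAt_inv hprodne).comp_hasFDerivAt w (hrd.mul hud)
  have huinv := (hasDerivAt_inv hune).comp_hasFDerivAt w hud
  have hsd := hasFDerivAt_snd.mul huinv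
  have hEq : Real.sqrt (w.1 ^ 2 + w.2 ^ 2) = rr w := rfl
  apply (htd.prodMk hsd).congr_fderiv
  apply ContinuousLinearMap.ext
  intro v
  rw [hEq] at *
  simp only [Jt, Js, tt, ContinuousLinearMap.prod_apply, ContinuousLinearMap.smul_apply,
    ContinuousLinearMap.sub_apply, ContinuousLinearMap.add_apply, ContinuousLinearMap.coe_fst',
    ContinuousLinearMap.coe_snd', smul_eq_mul, Prod.mk.injEq, Function.comp]
  constructor
  · field_simp
    ring_nf
  · field_simp
    linear_combination (2 * v.2) * h2

end CSAux

namespace CSAux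

lemma GG_FF {w : ℝ × ℝ} (hw : w ∈ D2) : GG (FF w) = w := by
  have hr := rr_pos hw
  have hu := uu_pos hw
  have h2 := rr_sq w
  have hrne : rr w ≠ 0 := ne_of_gt hr
  have hune : rr w - w.1 ≠ 0 := ne_of_gt hu
  have hB : (FF w).1 * ((FF w).2 ^ 2 + 1) = 2 / (rr w - w.1) ^ 2 := by
    simp only [FF, tt]
    field_simp
    linear_combination (-1) * h2
  have hA : 2 / ((FF w).1 * ((FF w).2 ^ 2 + 1)) = (rr w - w.1) ^ 2 := by
    rw [hB]
    field_simp
  have hS : Real.sqrt (2 / ((FF w).1 * ((FF w).2 ^ 2 + 1))) = rr w - w.1 := by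
    rw [hA]; exact Real.sqrt_sq hu.le
  have : GG (FF w) = (Real.sqrt (2 / ((FF w).1 * ((FF w).2 ^ 2 + 1))) * ((FF w).2 ^ 2 - 1) / 2,
      (FF w).2 * Real.sqrt (2 / ((FF w).1 * ((FF w).2 ^ 2 + 1)))) := rfl
  rw [this, hS, Prod.ext_iff]
  constructor
  · show (rr w - w.1) * ((w.2 * (rr w - w.1)⁻¹) ^ 2 - 1) / 2 = w.1
    field_simp
    linear_combination (-1) * h2
  · show w.2 * (rr w - w.1)⁻¹ * (rr w - w.1) = w.2
    field_simp

lemma FF_GG {z : ℝ × ℝ} (hz : 0 < z.1) : FF (GG z) = z ∧ GG z ∈ D2 := by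
  have hz1 : z.1 ≠ 0 := ne_of_gt hz
  have hs1 : (0:ℝ) < z.2 ^ 2 + 1 := by positivity
  have hden : (0:ℝ) < 2 / (z.1 * (z.2 ^ 2 + 1)) := by positivity
  set u := Real.sqrt (2 / (z.1 * (z.2 ^ 2 + 1))) with hudef
  have hupos : 0 < u := Real.sqrt_pos.mpr hden
  have hune : u ≠ 0 := ne_of_gt hupos
  have hu2 : u ^ 2 = 2 / (z.1 * (z.2 ^ 2 + 1)) := Real.sq_sqrt hden.le
  have hu2' : u ^ 2 * (z.1 * (z.2 ^ 2 + 1)) = 2 := by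
    rw [hu2]; field_simp
  have hGG : GG z = (u * (z.2 ^ 2 - 1) / 2, z.2 * u) := rfl
  have hxy : (GG z).1 ^ 2 + (GG z).2 ^ 2 = (u * (z.2 ^ 2 + 1) / 2) ^ 2 := by
    rw [hGG]; ring
  have hrGG : rr (GG z) = u * (z.2 ^ 2 + 1) / 2 := by
    unfold rr; rw [hxy]; exact Real.sqrt_sq (by positivity)
  have husub : rr (GG z) - (GG z).1 = u := by rw [hrGG, hGG]; ring
  constructor
  · have h1 : rr (GG z) * u = z.1⁻¹ := by
      rw [hrGG]
      field_simp
      linear_combination hu2'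
    have h2 : (GG z).2 * u⁻¹ = z.2 := by
      rw [hGG]
      field_simp
    show (tt (GG z), (GG z).2 * (rr (GG z) - (GG z).1)⁻¹) = z
    unfold tt
    rw [husub, h1, h2, inv_inv]
  · intro hmem
    obtain ⟨hy0, hx0⟩ := hmem
    have hz2 : z.2 = 0 := by
      have : z.2 * u = 0 := hy0
      rcases mul_eq_zero.mp this with h | h
      · exact h
      · exact absurd h hune
    have : (GG z).1 = -u / 2 := by rw [hGG, hz2]; ring
    rw [this] at hx0
    nlinarith

lemma contDiffOn_FF : ContDiffOn ℝ (⊤ : ℕ∞) FF D2 := by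
  intro w hw
  apply ContDiffAt.contDiffWithinAt
  have hr := rr_pos hw
  have hu := uu_pos hw
  have hsq := sq_pos hw
  have hrC : ContDiffAt ℝ (⊤ : ℕ∞) rr w := by
    have hpoly : ContDiffAt ℝ (⊤ : ℕ∞) (fun w : ℝ × ℝ => w.1 ^ 2 + w.2 ^ 2) w :=
      ((contDiff_fst.pow 2).add (contDiff_snd.pow 2)).contDiffAt
    exact (Real.contDiffAt_sqrt (ne_of_gt hsq)).comp w hpoly
  have huC : ContDiffAt ℝ (⊤ : ℕ∞) (fun w : ℝ × ℝ => rr w - w.1) w := hrC.sub contDiffAt_fst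
  have htC : ContDiffAt ℝ (⊤ : ℕ∞) tt w :=
    (hrC.mul huC).inv (mul_ne_zero (ne_of_gt hr) (ne_of_gt hu))
  exact htC.prodMk (contDiffAt_snd.mul (huC.inv (ne_of_gt hu)))

lemma contDiffOn_tt : ContDiffOn ℝ (⊤ : ℕ∞) tt D2 := by
  intro w hw
  apply ContDiffAt.contDiffWithinAt
  have hr := rr_pos hw
  have hu := uu_pos hw
  have hsq := sq_pos hw
  have hrC : ContDiffAt ℝ (⊤ : ℕ∞) rr w := by
    have hpoly : ContDiffAt ℝ (⊤ : ℕ∞) (fun w : ℝ × ℝ => w.1 ^ 2 + w.2 ^ 2) w :=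
      ((contDiff_fst.pow 2).add (contDiff_snd.pow 2)).contDiffAt
    exact (Real.contDiffAt_sqrt (ne_of_gt hsq)).comp w hpoly
  have huC : ContDiffAt ℝ (⊤ : ℕ∞) (fun w : ℝ × ℝ => rr w - w.1) w := hrC.sub contDiffAt_fst
  exact (hrC.mul huC).inv (mul_ne_zero (ne_of_gt hr) (ne_of_gt hu))

lemma hasFDerivAt_Phi {q : V3 × ℝ × ℝ} (hq : q.2 ∈ D2) :
    HasFDerivAt (fun q : V3 × ℝ × ℝ => (q.1, FF q.2))
      ((ContinuousLinearMap.id ℝ V3).prodMap ((Jt q.2).prod (Js q.2))) q :=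
  HasFDerivAt.prodMap q (hasFDerivAt_id q.1) (hasFDerivAt_FF hq)

end CSAux

open CSAux

theorem contactization_of_symplectization_model
    (α : V3 → V3 →L[ℝ] ℝ) (hα : IsContactForm3 α) :
    ∃ Φ : V3 × ℝ × ℝ → V3 × ℝ × ℝ,
      ContDiffOn ℝ (⊤ : ℕ∞) Φ complL ∧ Set.InjOn Φ complL ∧ Φ '' complL = posT ∧
      (∀ q ∈ complL, Function.Injective (fderiv ℝ Φ q)) ∧
      ∃ h : V3 × ℝ × ℝ → ℝ,
        ContDiffOn ℝ (⊤ : ℕ∞) h complL ∧ (∀ q ∈ complL, h q ≠ 0) ∧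
        -- Φ*(tα - ds) = h · (α + r²dθ), with r²dθ = x dy - y dx
        ∀ q ∈ complL, ∀ v : V3 × ℝ × ℝ,
          (Φ q).2.1 * α (Φ q).1 (fderiv ℝ Φ q v).1 - (fderiv ℝ Φ q v).2.2
            = h q * (α q.1 v.1 + (q.2.1 * v.2.2 - q.2.2 * v.2.1)) := by

  have hmem : ∀ q : V3 × ℝ × ℝ, q ∈ complL ↔ q.2 ∈ D2 := fun q => Iff.rfl
  refine ⟨fun q => (q.1, FF q.2), ?_, ?_, ?_, ?_, fun q => tt q.2, ?_, ?_, ?_⟩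
  · exact (contDiff_fst.contDiffOn).prodMk
      (contDiffOn_FF.comp (contDiff_snd.contDiffOn) (fun q hq => hq))
  · intro a ha b hb hab
    rw [Prod.ext_iff] at hab
    have h2 : a.2 = b.2 := by
      have := congrArg GG hab.2
      rwa [GG_FF ((hmem a).mp ha), GG_FF ((hmem b).mp hb)] at this
    exact Prod.ext hab.1 h2
  · ext z
    constructor
    · rintro ⟨q, hq, rfl⟩
      have hq2 : q.2 ∈ D2 := (hmem q).mp hq
      show 0 < tt q.2
      exact tt_pos hq2
    · intro hz
      have hz1 : 0 < z.2.1 := hz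
      obtain ⟨hFG, hmem2⟩ := FF_GG (z := z.2) hz1
      exact ⟨(z.1, GG z.2), hmem2, by simp [hFG]⟩
  · intro q hq
    have hq2 : q.2 ∈ D2 := (hmem q).mp hq
    have hd := (hasFDerivAt_Phi hq2).fderiv
    rw [hd]
    have hr := rr_pos hq2
    have hu := uu_pos hq2
    have h2 := rr_sq q.2
    have ht := tt_pos hq2
    have key : ∀ v : V3 × ℝ × ℝ,
        ((ContinuousLinearMap.id ℝ V3).prodMap ((Jt q.2).prod (Js q.2))) v = 0 → v = 0 := by
      intro v hv
      rw [Prod.ext_iff, Prod.ext_iff] at hv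
      obtain ⟨hv1, hvt, hvs⟩ := hv
      have hvt' : (rr q.2 ^ 3 * (rr q.2 - q.2.1) ^ 2)⁻¹ *
          ((rr q.2 - q.2.1) ^ 2 * v.2.1 - q.2.2 * (2 * rr q.2 - q.2.1) * v.2.2) = 0 := by
        have := hvt
        simpa [Jt, ContinuousLinearMap.smul_apply, ContinuousLinearMap.sub_apply,
          ContinuousLinearMap.coe_prodMap', Prod.map, smul_eq_mul, mul_sub, mul_assoc] using this
      have hvs' : tt q.2 * (q.2.2 * v.2.1 - q.2.1 * v.2.2) = 0 := by
        have := hvs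
        simpa [Js, ContinuousLinearMap.smul_apply, ContinuousLinearMap.sub_apply,
          ContinuousLinearMap.coe_prodMap', Prod.map, smul_eq_mul, mul_sub] using this
      have hinvne : (rr q.2 ^ 3 * (rr q.2 - q.2.1) ^ 2)⁻¹ ≠ 0 := by positivity
      have e1 : (rr q.2 - q.2.1) ^ 2 * v.2.1 - q.2.2 * (2 * rr q.2 - q.2.1) * v.2.2 = 0 := by
        rcases mul_eq_zero.mp hvt' with h | h
        · exact absurd h hinvne
        · exact h
      have e2 : q.2.2 * v.2.1 - q.2.1 * v.2.2 = 0 := by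
        rcases mul_eq_zero.mp hvs' with h | h
        · exact absurd h (ne_of_gt ht)
        · exact h
      have hb0 : v.2.2 = 0 := by
        have hfac : 2 * rr q.2 ^ 2 * (rr q.2 - q.2.1) * v.2.2 = 0 := by
          linear_combination (-q.2.2) * e1 + (rr q.2 - q.2.1) ^ 2 * e2
            + (2 * rr q.2 - q.2.1) * v.2.2 * h2
        have hne : 2 * rr q.2 ^ 2 * (rr q.2 - q.2.1) ≠ 0 := by positivity
        rcases mul_eq_zero.mp hfac with h | h
        · exact absurd h hne
        · exact h
      have ha0 : v.2.1 = 0 := by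
        have : (rr q.2 - q.2.1) ^ 2 * v.2.1 = 0 := by
          linear_combination e1 + q.2.2 * (2 * rr q.2 - q.2.1) * hb0
        rcases mul_eq_zero.mp this with h | h
        · exact absurd h (by positivity)
        · exact h
      exact Prod.ext hv1 (Prod.ext ha0 hb0)
    intro a b hab
    have : ((ContinuousLinearMap.id ℝ V3).prodMap ((Jt q.2).prod (Js q.2))) (a - b) = 0 := by
      rw [map_sub, hab, sub_self]
    have := key _ this
    exact sub_eq_zero.mp this
  · exact contDiffOn_tt.comp (contDiff_snd.contDiffOn) (fun q hq => hq)
  · intro q hq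
    exact ne_of_gt (tt_pos ((hmem q).mp hq))
  · intro q hq v
    have hq2 : q.2 ∈ D2 := (hmem q).mp hq
    have hd := (hasFDerivAt_Phi hq2).fderiv
    rw [hd]
    have heval1 : (((ContinuousLinearMap.id ℝ V3).prodMap ((Jt q.2).prod (Js q.2))) v).1 = v.1 :=
      rfl
    have heval2 : (((ContinuousLinearMap.id ℝ V3).prodMap ((Jt q.2).prod (Js q.2))) v).2.2
        = tt q.2 * (q.2.2 * v.2.1 - q.2.1 * v.2.2) := by
      simp [Js, ContinuousLinearMap.smul_apply, ContinuousLinearMap.sub_apply,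
        ContinuousLinearMap.coe_prodMap', Prod.map, smul_eq_mul, mul_sub]
    rw [heval1, heval2]
    show tt q.2 * α q.1 v.1 - tt q.2 * (q.2.2 * v.2.1 - q.2.1 * v.2.2)
      = tt q.2 * (α q.1 v.1 + (q.2.1 * v.2.2 - q.2.2 * v.2.1))
    ring
end
end
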